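/- Let S be a commutative ring, x an ideal of S, and E an Artinian S-module. If xE = E, then there exists an element x ∈ x with xE = E. -/
import Mathlib

open Pointwise

namespace Stmt14Aux

variable {S : Type*} [CommRing S] {E : Type*} [AddCommGroup E] [Module S E]

/-- A submodule is "secondary-ish": every scalar acts surjectively or nilpotently on it. -/
def IsSec (N : Submodule S E) : Prop :=
  ∀ s : S, s • N = N ∨ ∃ n : ℕ, (s ^ n) • N = (⊥ : Submodule S E)

lemma mem_psmul {a : S} {N : Submodule S E} {e : E} :
    e ∈ a • N ↔ ∃ u ∈ N, a • u = e := by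
  constructor
  · rintro ⟨u, hu, rfl⟩; exact ⟨u, hu, rfl⟩
  · rintro ⟨u, hu, rfl⟩; exact ⟨u, hu, rfl⟩

lemma psmul_le_self (a : S) (N : Submodule S E) : a • N ≤ N := by
  intro e he
  obtain ⟨u, hu, rfl⟩ := mem_psmul.mp he
  exact N.smul_mem a hu

lemma psmul_mono {N P : Submodule S E} (a : S) (h : N ≤ P) : a • N ≤ a • P := by
  intro e he
  obtain ⟨u, hu, rfl⟩ := mem_psmul.mp he
  exact mem_psmul.mpr ⟨u, h hu, rfl⟩

lemma psmul_psmul (a b : S) (N : Submodule S E) : (a * b) • N = a • (b • N) :=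
  mul_smul a b N

lemma psmul_pow_le_self (a : S) (n : ℕ) (N : Submodule S E) : (a ^ n) • N ≤ N :=
  psmul_le_self _ _

lemma psmul_pow_succ_le (a : S) (n : ℕ) (N : Submodule S E) :
    (a ^ (n + 1)) • N ≤ a • N := by
  rw [pow_succ', psmul_psmul]
  exact psmul_mono a (psmul_le_self _ _)

lemma psmul_pow_eq_self {a : S} {N : Submodule S E} (h : a • N = N) (n : ℕ) :
    (a ^ n) • N = N := by
  induction n with
  | zero => simpa using (one_smul S N)
  | succ k ih => rw [pow_succ', psmul_psmul, ih, h]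

lemma psmul_eq_bot_iff {a : S} {N : Submodule S E} :
    a • N = ⊥ ↔ a ∈ (N.annihilator : Ideal S) := by
  rw [Submodule.mem_annihilator]
  constructor
  · intro h e he
    have : a • e ∈ a • N := mem_psmul.mpr ⟨e, he, rfl⟩
    rw [h] at this
    simpa using this
  · intro h
    apply le_bot_iff.mp
    intro e he
    obtain ⟨u, hu, rfl⟩ := mem_psmul.mp he
    simpa using h u hu

/-- Every submodule of an Artinian module is a finite sum of secondary submodules. -/
lemma exists_sec_rep [IsArtinian S E] (N : Submodule S E) :
    ∃ T : Finset (Submodule S E), (∀ P ∈ T, IsSec P) ∧ T.sup id = N := by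
  classical
  induction N using WellFoundedLT.induction with
  | ind N ih =>
    by_cases hN : IsSec N
    · exact ⟨{N}, by simpa using hN, by simp⟩
    · -- extract a scalar that is neither surjective nor nilpotent on N
      simp only [IsSec, not_forall] at hN
      obtain ⟨s, hs⟩ := hN
      push_neg at hs
      obtain ⟨hs1, hs2⟩ := hs
      -- stabilize the chain of images of powers of s
      obtain ⟨P, ⟨n, hn1, rfl⟩, hmin⟩ := IsArtinian.set_has_minimal
        {P : Submodule S E | ∃ k : ℕ, 1 ≤ k ∧ P = (s ^ k) • N}
        ⟨s • N, 1, le_refl _, by rw [pow_one]⟩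
      have hstab : (s ^ (2 * n)) • N = (s ^ n) • N := by
        have hle : (s ^ (2 * n)) • N ≤ (s ^ n) • N := by
          rw [two_mul, pow_add, psmul_psmul]
          exact psmul_mono _ (psmul_pow_le_self _ _ _)
        have : ¬ ((s ^ (2 * n)) • N < (s ^ n) • N) :=
          hmin _ ⟨2 * n, by omega, rfl⟩
        exact hle.lt_or_eq.resolve_left this
      -- Fitting-style decomposition
      set K : Submodule S E := N ⊓ Submodule.torsionBy S E (s ^ n) with hK
      have hdecomp : (s ^ n) • N ⊔ K = N := by
        apply le_antisymm
        · exact sup_le (psmul_pow_le_self _ _ _) inf_le_left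
        · intro e he
          have h1 : (s ^ n) • e ∈ (s ^ (2 * n)) • N := by
            rw [hstab]; exact mem_psmul.mpr ⟨e, he, rfl⟩
          rw [two_mul, pow_add, psmul_psmul] at h1
          obtain ⟨u, hu, hueq⟩ := mem_psmul.mp h1
          obtain ⟨v, hv, rfl⟩ := mem_psmul.mp hu
          -- e = sⁿ•v + (e - sⁿ•v)
          have hmem1 : (s ^ n) • v ∈ (s ^ n) • N := mem_psmul.mpr ⟨v, hv, rfl⟩
          have hmem2 : e - (s ^ n) • v ∈ K := by
            refine Submodule.mem_inf.mpr ⟨N.sub_mem he (N.smul_mem _ hv), ?_⟩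
            rw [Submodule.mem_torsionBy_iff, smul_sub, ← hueq, smul_smul, ← pow_add]
            ring_nf
            simp [sub_eq_zero]
          have := Submodule.add_mem_sup hmem1 hmem2
          simpa using this
      have hlt1 : (s ^ n) • N < N := by
        refine lt_of_le_of_ne (psmul_pow_le_self _ _ _) ?_
        intro h
        apply hs1
        refine le_antisymm (psmul_le_self _ _) ?_
        calc N = (s ^ n) • N := h.symm
          _ ≤ s • N := by
              obtain ⟨m, rfl⟩ := Nat.exists_eq_add_of_le hn1
              simpa [add_comm] using psmul_pow_succ_le s m N
      have hlt2 : K < N := by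
        refine lt_of_le_of_ne inf_le_left ?_
        intro h
        apply hs2 n
        apply le_bot_iff.mp
        intro e he
        obtain ⟨u, hu, rfl⟩ := mem_psmul.mp he
        rw [← h] at hu
        have := (Submodule.mem_inf.mp hu).2
        rw [Submodule.mem_torsionBy_iff] at this
        simpa using this
      obtain ⟨T₁, hT₁, hT₁sup⟩ := ih _ hlt1
      obtain ⟨T₂, hT₂, hT₂sup⟩ := ih _ hlt2
      refine ⟨T₁ ∪ T₂, ?_, ?_⟩
      · intro P hP
        rcases Finset.mem_union.mp hP with h | h
        · exact hT₁ P h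
        · exact hT₂ P h
      · rw [Finset.sup_union, hT₁sup, hT₂sup, hdecomp]

/-- The radical of the annihilator of a nonzero secondary submodule is prime. -/
lemma sec_prime {N : Submodule S E} (hsec : IsSec N) (hbot : N ≠ ⊥) :
    (N.annihilator).radical.IsPrime := by
  constructor
  · intro h
    have h1 : (1 : S) ∈ (N.annihilator).radical := h ▸ Submodule.mem_top
    obtain ⟨n, hn⟩ := Ideal.mem_radical_iff.mp h1
    rw [one_pow] at hn
    apply hbot
    apply le_bot_iff.mp
    intro e he
    simpa using Submodule.mem_annihilator.mp hn e he
  · intro a b hab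
    by_cases ha : a ∈ (N.annihilator).radical
    · exact Or.inl ha
    · right
      rcases hsec a with haN | ⟨m, hm⟩
      · obtain ⟨n, hn⟩ := Ideal.mem_radical_iff.mp hab
        refine Ideal.mem_radical_iff.mpr ⟨n, ?_⟩
        rw [← psmul_eq_bot_iff]
        have : (b ^ n) • N = (b ^ n) • ((a ^ n) • N) := by
          rw [psmul_pow_eq_self haN]
        rw [this, ← psmul_psmul, ← mul_pow, mul_comm b a, psmul_eq_bot_iff]
        exact hn
      · exact absurd (Ideal.mem_radical_iff.mpr ⟨m, psmul_eq_bot_iff.mp hm⟩) ha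

lemma ideal_pow_smul_top {I : Ideal S} (hIE : I • (⊤ : Submodule S E) = ⊤) (k : ℕ) :
    I ^ k • (⊤ : Submodule S E) = ⊤ := by
  induction k with
  | zero => simp
  | succ m ih => rw [pow_succ, mul_comm, ← Ideal.smul_eq_mul, Submodule.smul_assoc, ih, hIE]

lemma ideal_smul_finset_sup (J : Ideal S) (T : Finset (Submodule S E)) :
    J • T.sup id = T.sup (fun N => J • N) := by
  classical
  induction T using Finset.induction with
  | empty => simp
  | insert h =>
    rename_i N T' ih
    rw [Finset.sup_insert, Submodule.smul_sup, ih, Finset.sup_insert]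
    rfl

end Stmt14Aux

open Stmt14Aux Pointwise in
/-- If `E` is an Artinian module over a commutative ring `S` and `x` is a finitely
generated ideal with `xE = E`, then there is a single element `x ∈ x` with `xE = E`. -/
theorem stmt_14 (S : Type*) [CommRing S] (E : Type*) [AddCommGroup E] [Module S E]
    [IsArtinian S E] (I : Ideal S) (hIfg : I.FG)
    (hIE : I • (⊤ : Submodule S E) = ⊤) :
    ∃ x ∈ I, Function.Surjective (fun e : E => x • e) := by
  classical
  obtain ⟨T, hTsec, hTsup⟩ := exists_sec_rep (S := S) (E := E) ⊤
  set good : Finset (Submodule S E) :=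
    T.filter (fun N => ¬ I ≤ (N.annihilator).radical) with hgood
  -- every bad piece is killed by a power of I; choose a uniform power
  have hbad : ∀ N ∈ T, I ≤ (N.annihilator).radical → ∃ k, I ^ k • N = ⊥ := by
    intro N _ hle
    obtain ⟨k, hk⟩ := Ideal.exists_pow_le_of_le_radical_of_fg hle hIfg
    refine ⟨k, le_bot_iff.mp ?_⟩
    rw [Submodule.smul_le]
    intro r hr n hn
    simpa using Submodule.mem_annihilator.mp (hk hr) n hn
  choose f hf using hbad
  set k : ℕ := T.attach.sup (fun N => if h : I ≤ ((N : Submodule S E).annihilator).radical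
      then f N N.2 h else 0) with hkdef
  -- the good pieces generate
  have hgoodsup : good.sup id = ⊤ := by
    apply le_antisymm le_top
    have h1 : (⊤ : Submodule S E) = I ^ k • T.sup id := by
      rw [hTsup, ideal_pow_smul_top hIE]
    rw [h1, ideal_smul_finset_sup]
    apply Finset.sup_le
    intro N hN
    by_cases hNrad : I ≤ (N.annihilator).radical
    · have hfk : I ^ (f N hN hNrad) • N = ⊥ := hf N hN hNrad
      have hkk : f N hN hNrad ≤ k := by
        rw [hkdef]
        have := Finset.le_sup (f := fun P : {x // x ∈ T} =>
          if h : I ≤ ((P : Submodule S E).annihilator).radical then f P P.2 h else 0)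
          (Finset.mem_attach _ ⟨N, hN⟩)
        simpa [hNrad] using this
      calc I ^ k • N ≤ I ^ (f N hN hNrad) • N :=
            Submodule.smul_mono_left (Ideal.pow_le_pow_right hkk)
        _ = ⊥ := hfk
        _ ≤ good.sup id := bot_le
    · have hNg : N ∈ good := Finset.mem_filter.mpr ⟨hN, hNrad⟩
      calc I ^ k • N ≤ N := Submodule.smul_le.mpr (fun r _ n hn => N.smul_mem r hn)
        _ = id N := rfl
        _ ≤ good.sup id := Finset.le_sup hNg
  -- prime avoidance: find x ∈ I avoiding all the (prime) radicals of good pieces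
  have hprime : ∀ N ∈ good, ((N : Submodule S E).annihilator).radical.IsPrime := by
    intro N hNg
    obtain ⟨hNT, hNrad⟩ := Finset.mem_filter.mp hNg
    refine sec_prime (hTsec N hNT) ?_
    intro hbot
    apply hNrad
    rw [hbot]
    intro r _
    exact Ideal.mem_radical_iff.mpr ⟨1, by simp [Submodule.mem_annihilator]⟩
  have havoid : ¬ ((I : Set S) ⊆ ⋃ N ∈ (↑good : Set (Submodule S E)), ((N.annihilator).radical : Set S)) := by
    rw [Ideal.subset_union_prime (⊥ : Submodule S E) (⊥ : Submodule S E)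
      (fun N hNg _ _ => hprime N hNg)]
    rintro ⟨N, hNg, hle⟩
    exact (Finset.mem_filter.mp hNg).2 hle
  rw [Set.not_subset] at havoid
  obtain ⟨x, hxI, hx⟩ := havoid
  simp only [Set.mem_iUnion, not_exists, SetLike.mem_coe] at hx
  refine ⟨x, hxI, ?_⟩
  -- x acts surjectively on each good piece, hence on E
  have hxN : ∀ N ∈ good, x • N = N := by
    intro N hNg
    rcases hTsec N (Finset.mem_filter.mp hNg).1 x with h | ⟨n, hn⟩
    · exact h
    · exact absurd (Ideal.mem_radical_iff.mpr ⟨n, psmul_eq_bot_iff.mp hn⟩) (hx N hNg)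
  have hxtop : x • (⊤ : Submodule S E) = ⊤ := by
    apply le_antisymm (psmul_le_self _ _)
    have h2 : good.sup id ≤ x • (⊤ : Submodule S E) := by
      apply Finset.sup_le
      intro N hNg
      calc id N = x • N := (hxN N hNg).symm
        _ ≤ x • ⊤ := psmul_mono x le_top
    calc (⊤ : Submodule S E) = good.sup id := hgoodsup.symm
      _ ≤ x • ⊤ := h2
  intro e
  have : e ∈ x • (⊤ : Submodule S E) := by rw [hxtop]; trivial
  obtain ⟨u, _, hu⟩ := mem_psmul.mp this
  exact ⟨u, hu⟩
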